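/- arXiv:0709.2017 — 2 statements merged into one kernel-verified Lean document; each statement's English description precedes it below -/
import Mathlib

section
/- Let k : ℝ → ℝ be a smooth function and m ∈ ℝ. If k satisfies the Euler–Lagrange equation k''' − 6·k·k' + 2·m·k' = 0, then the reduced curvature h := (1/2)(k − m/3) satisfies ((h')²)' = (4h³ − c·h)' for some constant; more precisely, there exist real constants g₂, g₃ such that (h')² = 4h³ − g₂h − g₃ on ℝ. -/
/-!
Substituting `k = 2h + m/3` turns the Euler–Lagrange equation into `h''' = 12 h h'`, in which
`m` no longer appears. Integrating once gives `h'' = 6h² - g₂/2`; multiplying by `2h'` and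
integrating again gives the Weierstrass equation `(h')² = 4h³ - g₂h - g₃`.
-/

section FirstIntegrals

variable {𝕜 G : Type*} [RCLike 𝕜] [NormedAddCommGroup G] [NormedSpace 𝕜 G]

theorem exists_forall_sub_eq_of_hasDerivAt {u v w : 𝕜 → G}
    (hu : ∀ s, HasDerivAt u (w s) s) (hv : ∀ s, HasDerivAt v (w s) s) :
    ∃ c, ∀ s, u s - v s = c := by
  have hdiff : ∀ s, HasDerivAt (fun t => u t - v t) 0 s := fun s => by
    simpa using (hu s).fun_sub (hv s)
  exact ⟨u 0 - v 0, fun s =>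
    is_const_of_deriv_eq_zero (fun t => (hdiff t).differentiableAt) (fun t => (hdiff t).deriv)
      s 0⟩

theorem exists_weierstrass_eq_of_hasDerivAt {h h₁ h₂ : 𝕜 → 𝕜}
    (hh : ∀ s, HasDerivAt h (h₁ s) s) (hh₁ : ∀ s, HasDerivAt h₁ (h₂ s) s)
    (hh₂ : ∀ s, HasDerivAt h₂ (12 * h s * h₁ s) s) :
    ∃ g₂ g₃ : 𝕜, ∀ s, h₁ s ^ 2 = 4 * h s ^ 3 - g₂ * h s - g₃ := by
  obtain ⟨c₁, hc₁⟩ := exists_forall_sub_eq_of_hasDerivAt (v := fun t => 6 * h t ^ 2) hh₂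
    fun s => (((hh s).fun_pow 2).const_mul (6 : 𝕜)).congr_deriv (by push_cast; ring)
  have hsq : ∀ s, HasDerivAt (fun t => h₁ t ^ 2) (2 * h₁ s * h₂ s) s := fun s => by
    simpa [mul_comm] using (hh₁ s).fun_pow 2
  obtain ⟨c₂, hc₂⟩ := exists_forall_sub_eq_of_hasDerivAt
      (v := fun t => 4 * h t ^ 3 + 2 * c₁ * h t) hsq fun s =>
    ((((hh s).fun_pow 3).const_mul (4 : 𝕜)).fun_add ((hh s).const_mul (2 * c₁))).congr_deriv
      (by push_cast; linear_combination (-2 * h₁ s) * hc₁ s)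
  exact ⟨-2 * c₁, -c₂, fun s => by linear_combination hc₂ s⟩

end FirstIntegrals

theorem hasDerivAt_iteratedDeriv {𝕜 F : Type*} [NontriviallyNormedField 𝕜]
    [NormedAddCommGroup F] [NormedSpace 𝕜 F] {f : 𝕜 → F} {n : WithTop ℕ∞}
    (hf : ContDiff 𝕜 n f) {i : ℕ} (hi : i < n) (x : 𝕜) :
    HasDerivAt (iteratedDeriv i f) (iteratedDeriv (i + 1) f x) x := by
  rw [iteratedDeriv_succ]
  exact (hf.differentiable_iteratedDeriv i hi x).hasDerivAt

theorem reduced_curvature_potential (k : ℝ → ℝ) (m : ℝ)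
    (hk : ContDiff ℝ 3 k)
    (hEL : ∀ s : ℝ, iteratedDeriv 3 k s - 6 * k s * deriv k s + 2 * m * deriv k s = 0) :
    ∃ g₂ g₃ : ℝ, ∀ s : ℝ,
      (deriv (fun t => (k t - m / 3) / 2) s) ^ 2 =
        4 * ((k s - m / 3) / 2) ^ 3 - g₂ * ((k s - m / 3) / 2) - g₃ := by
  have hk₀ : ∀ s, HasDerivAt k (deriv k s) s := fun s => by
    simpa using hasDerivAt_iteratedDeriv hk (i := 0) (by norm_num) s
  have hk₁ : ∀ s, HasDerivAt (deriv k) (iteratedDeriv 2 k s) s := fun s => by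
    simpa using hasDerivAt_iteratedDeriv hk (i := 1) (by norm_num) s
  have hk₂ : ∀ s, HasDerivAt (iteratedDeriv 2 k) (iteratedDeriv 3 k s) s :=
    hasDerivAt_iteratedDeriv hk (i := 2) (by norm_num)
  have hh : ∀ s, HasDerivAt (fun t => (k t - m / 3) / 2) (deriv k s / 2) s := fun s =>
    ((hk₀ s).sub_const _).div_const 2
  obtain ⟨g₂, g₃, hW⟩ := exists_weierstrass_eq_of_hasDerivAt hh
    (fun s => (hk₁ s).div_const 2) fun s =>
      ((hk₂ s).div_const 2).congr_deriv (by linear_combination (1 / 2 : ℝ) * hEL s)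
  exact ⟨g₂, g₃, fun s => (hh s).deriv ▸ hW s⟩
end

section
/- Let Γ₊, Γ₋ : I → SL(2,ℝ) be differentiable maps satisfying Γ₊⁻¹Γ₊' = H₊ and Γ₋⁻¹Γ₋' = H₋, where H₊ = [[0,1],[k+1,0]] and H₋ = [[0,1],[k−1,0]] for a smooth function k : I → ℝ. Then γ := Γ₊·Γ₋⁻¹ is a null curve: det(γ⁻¹γ') = 0 identically on I. -/
attribute [local instance] Matrix.normedAddCommGroup Matrix.normedSpace

namespace SpinorNullAux

abbrev M := Matrix (Fin 2) (Fin 2) ℝ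

/-- adjugate as a linear map on 2×2 matrices -/
noncomputable def adjL : M →ₗ[ℝ] M where
  toFun A := A.trace • (1 : M) - A
  map_add' A B := by simp [add_smul]; abel
  map_smul' c A := by simp [smul_sub, smul_smul]

lemma adjL_eq (A : M) : adjL A = A.adjugate := by
  rw [Matrix.adjugate_fin_two]
  show A.trace • (1 : M) - A = _
  ext i j
  fin_cases i <;> fin_cases j <;>
    simp [Matrix.trace_fin_two, Matrix.one_apply]

/-- left multiplication as a linear map into continuous linear maps -/
noncomputable def mulL : M →ₗ[ℝ] (M →L[ℝ] M) where
  toFun A := LinearMap.toContinuousLinearMap (LinearMap.mulLeft ℝ A)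
  map_add' A B := by ext C; simp [add_mul]
  map_smul' c A := by ext C; simp [smul_mul_assoc]

noncomputable def mulCLM : M →L[ℝ] (M →L[ℝ] M) :=
  LinearMap.toContinuousLinearMap mulL

@[simp] lemma mulCLM_apply (A C : M) : mulCLM A C = A * C := rfl

noncomputable def adjCLM : M →L[ℝ] M := LinearMap.toContinuousLinearMap adjL

@[simp] lemma adjCLM_apply (A : M) : adjCLM A = A.adjugate := adjL_eq A

noncomputable instance : NormedAddCommGroup (M →L[ℝ] M) :=
  ContinuousLinearMap.toNormedAddCommGroup

noncomputable instance : NormedSpace ℝ (M →L[ℝ] M) :=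
  ContinuousLinearMap.toNormedSpace

end SpinorNullAux

open SpinorNullAux in
theorem spinor_product_is_null (I : Set ℝ) (hI : IsOpen I)
    (k : ℝ → ℝ) (hk : ContDiffOn ℝ (⊤ : ℕ∞) k I)
    (Γp Γm : ℝ → Matrix (Fin 2) (Fin 2) ℝ)
    (hp : ∀ s ∈ I, (Γp s).det = 1) (hm : ∀ s ∈ I, (Γm s).det = 1)
    (hdp : ∀ s ∈ I, HasDerivAt Γp (Γp s * !![(0 : ℝ), 1; k s + 1, 0]) s)
    (hdm : ∀ s ∈ I, HasDerivAt Γm (Γm s * !![(0 : ℝ), 1; k s - 1, 0]) s) :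
    ∀ s ∈ I, ((Γp s * (Γm s)⁻¹)⁻¹ * deriv (fun t => Γp t * (Γm t)⁻¹) s).det = 0 := by
  intro s hs
  -- inverse equals adjugate on I
  have hinv_eq : ∀ t ∈ I, (Γm t)⁻¹ = (Γm t).adjugate := by
    intro t ht
    rw [Matrix.inv_def, hm t ht]
    simp
  -- derivative of adjCLM ∘ Γm
  have hadj : HasDerivAt (fun t => adjCLM (Γm t))
      (adjCLM (Γm s * !![(0 : ℝ), 1; k s - 1, 0])) s :=
    adjCLM.hasFDerivAt.comp_hasDerivAt s (hdm s hs)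
  have hg : HasDerivAt (fun t => (Γm t)⁻¹)
      ((Γm s * !![(0 : ℝ), 1; k s - 1, 0]).adjugate) s := by
    have heq : (fun t => adjCLM (Γm t)) =ᶠ[nhds s] (fun t => (Γm t)⁻¹) := by
      filter_upwards [hI.mem_nhds hs] with t ht
      rw [hinv_eq t ht, adjCLM_apply]
    rw [adjCLM_apply] at hadj
    exact hadj.congr_of_eventuallyEq heq.symm
  -- derivative of the product
  have hc : HasDerivAt (fun t => mulCLM (Γp t))
      (mulCLM (Γp s * !![(0 : ℝ), 1; k s + 1, 0])) s :=
    mulCLM.hasFDerivAt.comp_hasDerivAt s (hdp s hs)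
  have hγ : HasDerivAt (fun t => Γp t * (Γm t)⁻¹)
      (Γp s * !![(0 : ℝ), 1; k s + 1, 0] * (Γm s)⁻¹ +
        Γp s * (Γm s * !![(0 : ℝ), 1; k s - 1, 0]).adjugate) s := by
    have := hc.clm_apply hg
    exact this
  have hderiv := hγ.deriv
  erw [hderiv]
  rw [Matrix.det_mul]
  have key : Γp s * !![(0 : ℝ), 1; k s + 1, 0] * (Γm s)⁻¹ +
      Γp s * (Γm s * !![(0 : ℝ), 1; k s - 1, 0]).adjugate
      = Γp s * ((!![(0 : ℝ), 1; k s + 1, 0] +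
          (!![(0 : ℝ), 1; k s - 1, 0]).adjugate) * (Γm s)⁻¹) := by
    rw [Matrix.adjugate_mul_distrib, hinv_eq s hs]
    noncomm_ring
  rw [key, Matrix.det_mul, Matrix.det_mul]
  have hN : (!![(0 : ℝ), 1; k s + 1, 0] + (!![(0 : ℝ), 1; k s - 1, 0]).adjugate).det = 0 := by
    rw [Matrix.adjugate_fin_two]
    norm_num [Matrix.det_fin_two]
  rw [hN]
  ring
end
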